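/- arXiv:2412.11508 — 2 statements merged into one kernel-verified Lean document; each statement's English description precedes it below -/
import Mathlib

section
/- The pair (α_n, β_n) with α_0 = 1, α_n = q^{n^2+n}(1-q^{2n+2})/(1-q^2) for n ≥ 1 (equivalently α_n = q^{n^2+n}(1-q^{2n+2})/(1-q^2) for all n ≥ 0), and β_n = 1/((q;q)_n (q^2;q)_n), is a Bailey pair relative to q^2: β_n = ∑_{r=0}^n α_r / ((q;q)_{n-r} (q^3;q)_{n+r}). -/
/-!
For any `a`, `α r = a^r q^{r(r-1)} (1 - a q^{2r}) / (1 - a)` and `β n = 1 / ((q;q)_n (a;q)_n)` form a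
Bailey pair relative to `a`; the theorem is the case `a = q²`. With
`T r = a^r q^{r(r-1)} / ((q;q)_{n-r} (a;q)_{n+r})`, the `r`-th term of the Bailey sum is `T r - T (r + 1)`
for `r < n` and `T n` for `r = n`, because `(1 - a q^{n+r}) - a q^{2r} (1 - q^{n-r}) = 1 - a q^{2r}`.
So the sum telescopes to `T 0 = β n`.
-/

open scoped BigOperators

noncomputable def qPoch (a q : ℂ) (n : ℕ) : ℂ := ∏ j ∈ Finset.range n, (1 - a * q ^ j)

noncomputable def qPochInf (a q : ℂ) : ℂ := ∏' j : ℕ, (1 - a * q ^ j)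

section QPochhammer

variable (a q : ℂ)

@[simp]
lemma qPoch_zero : qPoch a q 0 = 1 := Finset.prod_range_zero _

lemma qPoch_succ (n : ℕ) : qPoch a q (n + 1) = qPoch a q n * (1 - a * q ^ n) :=
  Finset.prod_range_succ _ _

lemma qPoch_succ' (n : ℕ) : qPoch a q (n + 1) = (1 - a) * qPoch (a * q) q n := by
  simp only [qPoch, Finset.prod_range_succ', pow_zero, mul_one, pow_succ, mul_assoc, mul_comm]

variable {a q}

lemma qPoch_ne_zero (ha : ∀ j : ℕ, a * q ^ j ≠ 1) (n : ℕ) : qPoch a q n ≠ 0 :=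
  Finset.prod_ne_zero_iff.mpr fun j _ => sub_ne_zero.mpr (ha j).symm

end QPochhammer

section BaileyPair

variable (a q : ℂ)

noncomputable def baileyWeight (r : ℕ) : ℂ := a ^ r * q ^ (r * (r - 1))

noncomputable def baileyAlpha (r : ℕ) : ℂ :=
  baileyWeight a q r * (1 - a * q ^ (2 * r)) / (1 - a)

noncomputable def baileyTail (n r : ℕ) : ℂ :=
  baileyWeight a q r / (qPoch q q (n - r) * qPoch a q (n + r))

lemma baileyWeight_succ (r : ℕ) :
    baileyWeight a q (r + 1) = a * q ^ (2 * r) * baileyWeight a q r := by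
  obtain _ | r := r
  · simp [baileyWeight]
  · simp only [baileyWeight, Nat.add_sub_cancel]
    ring

variable {a q}

lemma baileyAlpha_div_eq_baileyTail_sub (hq : ∀ k : ℕ, q ^ (k + 1) ≠ 1)
    (ha : ∀ k : ℕ, a * q ^ k ≠ 1) {n r : ℕ} (hr : r < n) :
    baileyAlpha a q r / (qPoch q q (n - r) * qPoch (a * q) q (n + r))
      = baileyTail a q n r - baileyTail a q n (r + 1) := by
  obtain ⟨k, rfl⟩ : ∃ k, n = r + k + 1 := ⟨n - r - 1, by omega⟩
  have hq' : ∀ j : ℕ, q * q ^ j ≠ 1 := fun j => by rw [← pow_succ']; exact hq j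
  have haq : ∀ j : ℕ, a * q * q ^ j ≠ 1 := fun j => by rw [mul_assoc, ← pow_succ']; exact ha _
  have hP := qPoch_ne_zero hq' k
  have hA := qPoch_ne_zero haq (2 * r + k)
  have h1 : 1 - q * q ^ k ≠ 0 := sub_ne_zero.mpr (hq' k).symm
  have h2 : 1 - a * q * q ^ (2 * r + k) ≠ 0 := sub_ne_zero.mpr (haq _).symm
  have h3 : (1 : ℂ) - a ≠ 0 := sub_ne_zero.mpr (by simpa using (ha 0).symm)
  simp only [baileyAlpha, baileyTail, baileyWeight_succ]
  rw [show r + k + 1 - r = k + 1 by omega, show r + k + 1 - (r + 1) = k by omega,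
    show r + k + 1 + r = 2 * r + k + 1 by omega, show r + k + 1 + (r + 1) = 2 * r + k + 1 + 1 by omega,
    qPoch_succ q q k, qPoch_succ (a * q) q (2 * r + k), qPoch_succ' a q (2 * r + k + 1),
    qPoch_succ' a q (2 * r + k), qPoch_succ (a * q) q (2 * r + k)]
  field_simp
  ring

lemma baileyAlpha_div_eq_baileyTail_self (ha : ∀ k : ℕ, a * q ^ k ≠ 1) (n : ℕ) :
    baileyAlpha a q n / (qPoch q q (n - n) * qPoch (a * q) q (n + n)) = baileyTail a q n n := by
  have hA := qPoch_ne_zero ha (2 * n)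
  have h1 : (1 : ℂ) - a * q ^ (2 * n) ≠ 0 := sub_ne_zero.mpr (ha _).symm
  have hshift : (1 - a) * qPoch (a * q) q (2 * n) = qPoch a q (2 * n) * (1 - a * q ^ (2 * n)) := by
    rw [← qPoch_succ', qPoch_succ]
  simp only [baileyAlpha, baileyTail, Nat.sub_self, qPoch_zero, one_mul, ← two_mul]
  rw [div_div, hshift]
  field_simp

theorem baileyPair_qPoch (hq : ∀ k : ℕ, q ^ (k + 1) ≠ 1) (ha : ∀ k : ℕ, a * q ^ k ≠ 1) (n : ℕ) :
    1 / (qPoch q q n * qPoch a q n)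
      = ∑ r ∈ Finset.range (n + 1),
          baileyAlpha a q r / (qPoch q q (n - r) * qPoch (a * q) q (n + r)) := by
  rw [Finset.sum_range_succ, baileyAlpha_div_eq_baileyTail_self ha,
    Finset.sum_congr rfl fun r hr =>
      baileyAlpha_div_eq_baileyTail_sub hq ha (Finset.mem_range.mp hr),
    Finset.sum_range_sub', sub_add_cancel]
  simp [baileyTail, baileyWeight]

end BaileyPair

theorem stmt14 (q : ℂ) (hq : ∀ k : ℕ, q ^ (k + 1) ≠ 1) (n : ℕ) :
    (1 : ℂ) / (qPoch q q n * qPoch (q ^ 2) q n)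
      = ∑ r ∈ Finset.range (n + 1),
          (q ^ (r ^ 2 + r) * (1 - q ^ (2 * r + 2)) / (1 - q ^ 2)) /
            (qPoch q q (n - r) * qPoch (q ^ 3) q (n + r)) := by
  have ha : ∀ k : ℕ, q ^ 2 * q ^ k ≠ 1 := fun k => by
    rw [← pow_add, add_comm]; exact hq (k + 1)
  have halpha (r : ℕ) :
      baileyAlpha (q ^ 2) q r = q ^ (r ^ 2 + r) * (1 - q ^ (2 * r + 2)) / (1 - q ^ 2) := by
    obtain _ | r := r
    · simp [baileyAlpha, baileyWeight]
    · simp only [baileyAlpha, baileyWeight, Nat.add_sub_cancel]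
      ring
  simp only [baileyPair_qPoch hq ha n, halpha, ← pow_succ]
end

section
/- The pair (α_n, β_n) with α_0 = 1, α_n = q^{n^2}(q^n - q^{-n}) for n ≥ 1, and β_n = q^n/(q;q)_n^2, is a Bailey pair relative to 1: β_n = ∑_{r=0}^n α_r / ((q;q)_{n-r} (q;q)_{n+r}). -/
/-! The partial sums of the Bailey sum have a closed form (Gosper's algorithm finds it): for `m ≤ n`,
`∑_{r ≤ m} α_r / ((q;q)_{n-r} (q;q)_{n+r}) = q^n / (q;q)_n^2 + q^{m(m+1)} (1 - q^{n-m}) / ((q;q)_{n-m} (q;q)_{n+m})`,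
checked by induction on `m`. At `m = n` the correction term vanishes because of its factor `1 - q^0`. -/

open scoped BigOperators

open Finset

lemma qPoch_self_succ (q : ℂ) (n : ℕ) :
    qPoch q q (n + 1) = qPoch q q n * (1 - q ^ (n + 1)) := by
  rw [pow_succ']
  exact prod_range_succ _ _

noncomputable def slaterAlpha (q : ℂ) (r : ℕ) : ℂ :=
  if r = 0 then 1 else q ^ (r ^ 2) * (q ^ r - (q ^ r)⁻¹)

section

variable {q : ℂ}

lemma one_sub_pow_succ_ne_zero (hq : ∀ k : ℕ, q ^ (k + 1) ≠ 1) (k : ℕ) : 1 - q ^ (k + 1) ≠ 0 :=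
  sub_ne_zero.mpr (hq k).symm

lemma qPoch_self_ne_zero (hq : ∀ k : ℕ, q ^ (k + 1) ≠ 1) (n : ℕ) : qPoch q q n ≠ 0 :=
  prod_ne_zero_iff.mpr fun j _ => by
    rw [← pow_succ']
    exact one_sub_pow_succ_ne_zero hq j

theorem sum_range_slaterAlpha_div (hq : ∀ k : ℕ, q ^ (k + 1) ≠ 1) (hq0 : q ≠ 0)
    {n m : ℕ} (hm : m ≤ n) :
    ∑ r ∈ range (m + 1), slaterAlpha q r / (qPoch q q (n - r) * qPoch q q (n + r))
      = q ^ n / qPoch q q n ^ 2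
        + q ^ (m * (m + 1)) * (1 - q ^ (n - m)) / (qPoch q q (n - m) * qPoch q q (n + m)) := by
  induction m with
  | zero =>
    have := qPoch_self_ne_zero hq n
    simp only [zero_add, range_one, sum_singleton, slaterAlpha, if_pos, Nat.sub_zero, add_zero]
    field_simp
    ring
  | succ m ih =>
    obtain ⟨k, rfl⟩ := Nat.exists_eq_add_of_le hm
    have hk : m + 1 + k - m = k + 1 := by omega
    rw [sum_range_succ, ih (by omega), hk, Nat.add_sub_cancel_left,
      qPoch_self_succ q k, show m + 1 + k + (m + 1) = m + 1 + k + m + 1 by ring,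
      qPoch_self_succ q (m + 1 + k + m), slaterAlpha, if_neg (Nat.succ_ne_zero m)]
    have := qPoch_self_ne_zero hq k
    have := qPoch_self_ne_zero hq (m + 1 + k + m)
    have := one_sub_pow_succ_ne_zero hq k
    have := one_sub_pow_succ_ne_zero hq (m + 1 + k + m)
    have := pow_ne_zero (m + 1) hq0
    field_simp
    ring

end

theorem stmt15 (q : ℂ) (hq : ∀ k : ℕ, q ^ (k + 1) ≠ 1) (hq0 : q ≠ 0) (n : ℕ) :
    q ^ n / qPoch q q n ^ 2
      = ∑ r ∈ Finset.range (n + 1),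
          (if r = 0 then (1 : ℂ) else q ^ (r ^ 2) * (q ^ r - (q ^ r)⁻¹)) /
            (qPoch q q (n - r) * qPoch q q (n + r)) := by
  have h := sum_range_slaterAlpha_div hq hq0 (le_refl n)
  rw [Nat.sub_self, pow_zero, sub_self, mul_zero, zero_div, add_zero] at h
  exact h.symm
end
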